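/- arXiv:0911.4351 — 2 statements merged into one kernel-verified Lean document; each statement's English description precedes it below -/
import Mathlib

section
/- For every integer 3 ≤ d ≤ n−1, if G = (V,E) is a d-regular graph on n vertices, then there exists a subgraph H ⊆ G with maximum degree Δ(H) ≤ d/2 + 4√(d·ln d) such that the graph G − H is disconnected. -/
open SimpleGraph Real
open scoped Classical

variable {V : Type*}

noncomputable def degN (H : SimpleGraph V) (v : V) : ℕ := (H.neighborSet v).ncard

noncomputable def maxDeg (H : SimpleGraph V) : ℕ := sSup (Set.range (degN H))

noncomputable def minDeg (H : SimpleGraph V) : ℕ := sInf (Set.range (degN H))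

noncomputable def localResilience [Fintype V] (G : SimpleGraph V)
    (P : SimpleGraph V → Prop) : ℕ :=
  sInf {r | ∃ H ≤ G, maxDeg H = r ∧ ¬ P (G \ H)}

def EdgeConnK [Fintype V] (G : SimpleGraph V) (k : ℕ) : Prop :=
  ∀ s : Finset (Sym2 V), s.card < k → (G.deleteEdges ↑s).Connected

def VertConnK [Fintype V] (G : SimpleGraph V) (k : ℕ) : Prop :=
  ∀ S : Finset V, S.card < k → (G.induce ((↑S : Set V)ᶜ)).Connected

def IsReg (G : SimpleGraph V) (d : ℕ) : Prop := ∀ v, degN G v = d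

noncomputable def quadForm [Fintype V] (G : SimpleGraph V) (x : V → ℝ) : ℝ :=
  ∑ u, ∑ v, if G.Adj u v then x u * x v else 0

/-- `(n,d,lam)`-graph: `d`-regular and all eigenvalues of the adjacency matrix other
than the top one (i.e. on the orthogonal complement of the all-ones vector) are at
most `lam` in absolute value. -/
def IsNDL [Fintype V] (G : SimpleGraph V) (d : ℕ) (lam : ℝ) : Prop :=
  IsReg G d ∧ ∀ x : V → ℝ, (∑ v, x v) = 0 → |quadForm G x| ≤ lam * ∑ v, (x v) ^ 2

noncomputable def edgesWithin (G : SimpleGraph V) (U : Set V) : ℕ :=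
  {e ∈ G.edgeSet | ∀ v ∈ e, v ∈ U}.ncard

noncomputable def edgesBetween (G : SimpleGraph V) (U W : Set V) : ℕ :=
  {p : V × V | p.1 ∈ U ∧ p.2 ∈ W ∧ G.Adj p.1 p.2}.ncard

def nbhd (G : SimpleGraph V) (S : Set V) : Set V :=
  {v | v ∉ S ∧ ∃ u ∈ S, G.Adj u v}

noncomputable def maxPathLength (G : SimpleGraph V) : ℕ :=
  sSup {n | ∃ (u v : V) (p : G.Walk u v), p.IsPath ∧ p.length = n}

def Booster [Fintype V] (G : SimpleGraph V) (u v : V) : Prop :=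
  u ≠ v ∧ ¬ G.Adj u v ∧
    ((G ⊔ fromEdgeSet {s(u, v)}).IsHamiltonian ∨
      maxPathLength G < maxPathLength (G ⊔ fromEdgeSet {s(u, v)}))

def BSet [Fintype V] (G : SimpleGraph V) (v : V) : Set V := {w | Booster G v w}

def boosterSet [Fintype V] (G : SimpleGraph V) : Set (Sym2 V) :=
  {e | ∃ u v, e = s(u, v) ∧ Booster G u v}

def IsExpander [Fintype V] (G : SimpleGraph V) (ε : ℝ) : Prop :=
  (∀ S : Set V, (S.ncard : ℝ) < ε * (Fintype.card V) →
      10 * S.ncard ≤ (nbhd G S).ncard) ∧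
  (∀ S : Set V, ε * (Fintype.card V) ≤ (S.ncard : ℝ) →
      (S.ncard : ℝ) ≤ 2 * ε * (Fintype.card V) →
      (1 + 12 * ε) * (Fintype.card V) / 2 ≤ ((nbhd G S).ncard : ℝ))

def IsMagnifier (G : SimpleGraph V) (k ℓ : ℝ) : Prop :=
  ∀ U : Set V, (U.ncard : ℝ) ≤ k → ℓ * U.ncard ≤ ((nbhd G U).ncard : ℝ)

def QuasiRandom [Fintype V] (G : SimpleGraph V) (d : ℕ) (ε : ℝ) : Prop :=
  ((d : ℝ) / 2 ≤ (minDeg G : ℝ) ∧ (maxDeg G : ℝ) ≤ 2 * d) ∧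
  (∀ U : Set V, (U.ncard : ℝ) < ε ^ 3 * (Fintype.card V) / 14 →
      (edgesWithin G U : ℝ) ≤ ε ^ 3 * d * U.ncard / 14) ∧
  (∀ U W : Set V, Disjoint U W →
      ε ^ 3 / 160 * (Fintype.card V) ≤ (U.ncard : ℝ) →
      (U.ncard : ℝ) < 2 * (ε ^ 3 / 160) * (Fintype.card V) →
      (Fintype.card V : ℝ) / 2 * (1 - ε / 2 - 4 * (ε ^ 3 / 160)) ≤ (W.ncard : ℝ) →
      (d : ℝ) * (1 - ε / 4) / (Fintype.card V) * (U.ncard * W.ncard)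
          - (1 - ε) * (d : ℝ) / 2 * U.ncard ≤ (edgesBetween G U W : ℝ))

def bipartiteBetween (G : SimpleGraph V) (S : Set V) : SimpleGraph V where
  Adj u v := G.Adj u v ∧ ((u ∈ S ∧ v ∉ S) ∨ (u ∉ S ∧ v ∈ S))
  symm := by
    constructor
    intro u v h
    exact ⟨h.1.symm, h.2.elim (fun hh => Or.inr ⟨hh.2, hh.1⟩) (fun hh => Or.inl ⟨hh.2, hh.1⟩)⟩
  loopless := by
    constructor
    intro v h
    exact G.irrefl h.1

def LegalStrategy [Fintype V] (G : SimpleGraph V)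
    (σ : Finset (Sym2 V) × Finset (Sym2 V) → Sym2 V) : Prop :=
  ∀ s : Finset (Sym2 V) × Finset (Sym2 V),
    (∃ e ∈ G.edgeSet, e ∉ s.1 ∧ e ∉ s.2) →
    σ s ∈ G.edgeSet ∧ σ s ∉ s.1 ∧ σ s ∉ s.2

def playMB [DecidableEq V]
    (σ τ : Finset (Sym2 V) × Finset (Sym2 V) → Sym2 V) :
    ℕ → Finset (Sym2 V) × Finset (Sym2 V)
  | 0 => (∅, ∅)
  | n + 1 =>
      let p := playMB σ τ n
      let q : Finset (Sym2 V) × Finset (Sym2 V) := (p.1, insert (τ p) p.2)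
      (insert (σ q) q.1, q.2)


/-!
Colour the vertices uniformly at random with two colours and call a vertex bad when more than
`d / 2 + 4 √(d log d)` of its neighbours receive the other colour. An exponential-moment bound shows
that a vertex is bad with probability at most `d⁻⁴`; this event only depends on the colours of the
closed neighbourhood, so it is independent of all but `(d + 1)²` of the others. The Lovász Local
Lemma then leaves more than two colourings without bad vertices, hence a non-constant one, and `H`
is the set of its bichromatic edges: removing them separates the two colour classes.
-/

open Finset

section LocalLemma

variable {ι β : Type*} [Fintype V] [Fintype β]

/- Exchanging the `s`-coordinates of two assignments is an involution on pairs that carries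
`{E ∧ F} × univ` onto `{E} × {F}`. -/
theorem card_filter_and_mul_card_eq_of_dependsOn {E F : (V → β) → Prop} {s : Set V}
    (hE : DependsOn E s) (hF : DependsOn F sᶜ) :
    #{f | E f ∧ F f} * Fintype.card (V → β) = #{f | E f} * #{f | F f} := by
  have mix_mix (f g : V → β) : s.piecewise (s.piecewise f g) (s.piecewise g f) = f := by
    ext v; by_cases hv : v ∈ s <;> simp [hv]
  have hEmix (f g : V → β) : E (s.piecewise f g) = E f := hE fun v hv => by simp [hv]
  have hFmix (f g : V → β) : F (s.piecewise f g) = F g :=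
    hF fun v hv => by simp [show v ∉ s from hv]
  rw [← card_univ, ← card_product, ← card_product]
  refine card_nbij' (fun p => (s.piecewise p.1 p.2, s.piecewise p.2 p.1))
    (fun p => (s.piecewise p.1 p.2, s.piecewise p.2 p.1)) ?_ ?_ ?_ ?_
  · rintro ⟨f, g⟩ h
    simp_all
  · rintro ⟨f, g⟩ h
    simp_all
  all_goals rintro ⟨f, g⟩ -; simp [mix_mix]

variable (A : ι → (V → β) → Prop)

noncomputable def avoiding (S : Finset ι) : Finset (V → β) := {f | ∀ i ∈ S, ¬ A i f}

variable {A}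

theorem mem_avoiding {S : Finset ι} {f : V → β} : f ∈ avoiding A S ↔ ∀ i ∈ S, ¬ A i f := by
  simp [avoiding]

theorem avoiding_empty : avoiding A ∅ = univ := by
  simp [avoiding]

theorem avoiding_insert (i : ι) (S : Finset ι) :
    avoiding A (insert i S) = {f ∈ avoiding A S | ¬ A i f} := by
  ext f; simp [avoiding, and_comm]

theorem avoiding_anti {S T : Finset ι} (hST : S ⊆ T) : avoiding A T ⊆ avoiding A S :=
  fun _ hf => mem_avoiding.mpr fun i hi => mem_avoiding.mp hf i (hST hi)

theorem one_sub_mul_card_avoiding_le {x : ℝ} {S : Finset ι} {i : ι}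
    (h : (#{f ∈ avoiding A S | A i f} : ℝ) ≤ x * #(avoiding A S)) :
    (1 - x) * #(avoiding A S) ≤ #(avoiding A (insert i S)) := by
  have hsplit : (#{f ∈ avoiding A S | A i f} : ℝ) + #{f ∈ avoiding A S | ¬ A i f}
      = #(avoiding A S) := by exact_mod_cast card_filter_add_card_filter_not (s := avoiding A S) (A i)
  rw [avoiding_insert]
  linarith

theorem pow_mul_card_avoiding_le_card_avoiding_union {x : ℝ} (hx : x ≤ 1) {R T : Finset ι}
    (hRT : Disjoint R T)
    (h : ∀ S ⊂ R ∪ T, ∀ i, (#{f ∈ avoiding A S | A i f} : ℝ) ≤ x * #(avoiding A S)) :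
    (1 - x) ^ #T * #(avoiding A R) ≤ #(avoiding A (R ∪ T)) := by
  induction T using Finset.induction_on with
  | empty => simp
  | @insert j T hjT ih =>
    have hjR : j ∉ R := disjoint_right.mp hRT (mem_insert_self j T)
    have hssub : R ∪ T ⊂ R ∪ insert j T := by
      rw [union_insert]; exact ssubset_insert (by simp [hjR, hjT])
    have ih := ih (hRT.mono_right (subset_insert j T)) fun S hS => h S (hS.trans hssub)
    rw [card_insert_of_notMem hjT, union_insert, pow_succ', mul_assoc]
    calc (1 - x) * ((1 - x) ^ #T * #(avoiding A R))
        ≤ (1 - x) * #(avoiding A (R ∪ T)) := by gcongr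
      _ ≤ #(avoiding A (insert j (R ∪ T))) := one_sub_mul_card_avoiding_le (h _ hssub j)

variable {D : ι → Set V} {x : ℝ} {k : ℕ}

/- The induction step of the Local Lemma: the events of `S` split into those whose coordinates
avoid `D i`, which are independent of `A i`, and at most `k` others, each of which costs a factor
`1 - x` by the induction hypothesis. -/
theorem card_avoiding_filter_le [Fintype ι] (hA : ∀ i, DependsOn (A i) (D i))
    (hx0 : 0 ≤ x) (hx1 : x ≤ 1) (hD : ∀ i, #{j | ¬ Disjoint (D j) (D i)} ≤ k)
    (hp : ∀ i, (#{f | A i f} : ℝ) ≤ x * (1 - x) ^ k * Fintype.card (V → β))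
    (S : Finset ι) (i : ι) :
    (#{f ∈ avoiding A S | A i f} : ℝ) ≤ x * #(avoiding A S) := by
  induction S using Finset.strongInduction generalizing i with
  | H S ih =>
  rcases isEmpty_or_nonempty (V → β) with hΩ | hΩ
  · simp [eq_empty_of_isEmpty]
  set T := {j ∈ S | ¬ Disjoint (D j) (D i)}
  set R := {j ∈ S | Disjoint (D j) (D i)}
  have hRT : R ∪ T = S := filter_union_filter_not_eq _ S
  have hAR : DependsOn (fun f => ∀ j ∈ R, ¬ A j f) (D i)ᶜ := fun f g hfg =>
    propext <| forall₂_congr fun j hj => by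
      rw [hA j fun v hv => hfg v ((mem_filter.mp hj).2.subset_compl_right hv)]
  have hindep : #{f ∈ avoiding A R | A i f} * Fintype.card (V → β)
      = #(avoiding A R) * #{f | A i f} := by
    rw [avoiding, filter_filter]
    convert card_filter_and_mul_card_eq_of_dependsOn hAR ((hA i).mono (compl_compl (D i)).ge)
      using 3 <;> ext <;> simp
  have hR : (#{f ∈ avoiding A R | A i f} : ℝ) ≤ x * (1 - x) ^ k * #(avoiding A R) := by
    refine le_of_mul_le_mul_right ?_ (Nat.cast_pos.mpr (Fintype.card_pos (α := V → β)))
    calc (#{f ∈ avoiding A R | A i f} : ℝ) * Fintype.card (V → β)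
        = #(avoiding A R) * #{f | A i f} := by exact_mod_cast hindep
      _ ≤ #(avoiding A R) * (x * (1 - x) ^ k * Fintype.card (V → β)) := by gcongr; exact hp i
      _ = _ := by ring
  have hpeel : (1 - x) ^ k * #(avoiding A R) ≤ #(avoiding A S) := by
    have hTk : #T ≤ k := (card_le_card (filter_subset_filter _ (subset_univ S))).trans (hD i)
    calc (1 - x) ^ k * #(avoiding A R) ≤ (1 - x) ^ #T * #(avoiding A R) := by
          gcongr (?_ : ℝ) * _
          exact pow_le_pow_of_le_one (by linarith) (by linarith) hTk
      _ ≤ #(avoiding A S) := by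
          rw [← hRT]
          exact pow_mul_card_avoiding_le_card_avoiding_union hx1 (disjoint_filter_filter_not _ _ _)
            fun S' hS' j => ih S' (hRT ▸ hS') j
  calc (#{f ∈ avoiding A S | A i f} : ℝ) ≤ #{f ∈ avoiding A R | A i f} := by
        gcongr; exact avoiding_anti (filter_subset _ S)
    _ ≤ x * ((1 - x) ^ k * #(avoiding A R)) := by rw [← mul_assoc]; exact hR
    _ ≤ x * #(avoiding A S) := by gcongr

/- The Lovász Local Lemma in counting form, with the same weight `x` for every event. -/
theorem pow_mul_card_le_card_avoiding [Fintype ι] (hA : ∀ i, DependsOn (A i) (D i))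
    (hx0 : 0 ≤ x) (hx1 : x ≤ 1) (hD : ∀ i, #{j | ¬ Disjoint (D j) (D i)} ≤ k)
    (hp : ∀ i, (#{f | A i f} : ℝ) ≤ x * (1 - x) ^ k * Fintype.card (V → β)) (S : Finset ι) :
    (1 - x) ^ #S * Fintype.card (V → β) ≤ #(avoiding A S) := by
  simpa [avoiding_empty] using pow_mul_card_avoiding_le_card_avoiding_union hx1 (disjoint_empty_left S)
    fun S' _ => card_avoiding_filter_le hA hx0 hx1 hD hp S'

end LocalLemma

theorem card_filter_le_mul_pow_le_sum {α : Type*} [Fintype α] {r : ℝ} (hr : 1 ≤ r)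
    (c : α → ℕ) (s : ℕ) : #{a | s ≤ c a} * r ^ s ≤ ∑ a, r ^ c a := by
  calc (#{a | s ≤ c a} : ℝ) * r ^ s = ∑ a with s ≤ c a, r ^ s := by
        rw [sum_const, nsmul_eq_mul]
    _ ≤ ∑ a with s ≤ c a, r ^ c a :=
        sum_le_sum fun a ha => pow_le_pow_right₀ hr (mem_filter.mp ha).2
    _ ≤ ∑ a, r ^ c a :=
        sum_le_sum_of_subset_of_nonneg (filter_subset _ _) fun a _ _ => by positivity

theorem sum_pow_card_filter_eq [Fintype V] (N : Finset V) (c : Bool) (r : ℝ) :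
    ∑ f : V → Bool, r ^ #{u ∈ N | f u = c} = (1 + r) ^ #N * 2 ^ (Fintype.card V - #N) := by
  set w : V → Bool → ℝ := fun u b => if u ∈ N then (if b = c then r else 1) else 1
  have hprod (f : V → Bool) : r ^ #{u ∈ N | f u = c} = ∏ u, w u (f u) := by
    rw [Fintype.prod_ite_mem, ← prod_filter, prod_const]
  have hsum (u : V) : ∑ b, w u b = if u ∈ N then 1 + r else 2 := by
    by_cases hu : u ∈ N <;> cases c <;> simp [w, hu, add_comm]
  simp_rw [hprod]
  rw [← Fintype.prod_sum w, prod_congr rfl fun u _ => hsum u, prod_ite, prod_const, prod_const,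
    filter_mem_eq_inter, univ_inter, filter_not, filter_mem_eq_inter, univ_inter,
    ← compl_eq_univ_sdiff, card_compl]

noncomputable def cutThreshold (d : ℕ) : ℝ := d / 2 + 4 * √(d * log d)

theorem cutThreshold_nonneg (d : ℕ) : 0 ≤ cutThreshold d := by
  rw [cutThreshold]; positivity

/- Compare `log (1 + δ) ≥ δ - δ² / 2` with `log (1 + δ / 2) ≤ δ / 2` for `δ = 2 √(d log d) / d`:
the exponent gains `6 log d`, which pays for the factor `2 d⁴`. -/
theorem two_mul_pow_four_mul_pow_le_pow {d s : ℕ} (hd : 3 ≤ d)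
    (ht : 4 * √(d * log d) ≤ d / 2) (hs : cutThreshold d ≤ s) :
    2 * (d : ℝ) ^ 4 * (1 + √(d * log d) / d) ^ d ≤ (1 + 2 * √(d * log d) / d) ^ s := by
  have hd0 : (0 : ℝ) < d := by positivity
  have hL : log 2 ≤ log d := log_le_log (by norm_num) (by exact_mod_cast hd.trans' (by norm_num))
  have hL0 : 0 < log 2 := log_pos (by norm_num)
  set L := log (d : ℝ)
  set w := √(d * L)
  set δ := 2 * w / d
  have hw2 : w ^ 2 = d * L := sq_sqrt (by positivity)
  have hw0 : 0 ≤ w := sqrt_nonneg _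
  have hδ0 : 0 ≤ δ := by positivity
  have hδ2 : δ ≤ 2 := by simp only [δ]; rw [div_le_iff₀ hd0]; linarith
  have hlog : δ - δ ^ 2 / 2 ≤ log (1 + δ) := by
    refine le_trans ?_ (le_log_one_add_of_nonneg hδ0)
    rw [le_div_iff₀ (by positivity)]
    nlinarith [pow_nonneg hδ0 3]
  have hkey : log 2 + 4 * L + w ≤ s * log (1 + δ) := by
    have hexpand : (d / 2 + 4 * w) * (δ - δ ^ 2 / 2) = w + 7 * L - 8 * w * L / d := by
      simp only [δ]
      field_simp
      linear_combination (7 * (d : ℝ) - 8 * w) * hw2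
    have hwL : 8 * w * L / d ≤ L := by rw [div_le_iff₀ hd0]; nlinarith
    have hsδ : (d / 2 + 4 * w) * (δ - δ ^ 2 / 2) ≤ s * log (1 + δ) :=
      mul_le_mul hs hlog (by nlinarith) (Nat.cast_nonneg _)
    linarith
  calc 2 * (d : ℝ) ^ 4 * (1 + w / d) ^ d ≤ exp (log 2 + 4 * L) * exp w := by
        rw [exp_add, exp_log (by norm_num), show 4 * L = (4 : ℕ) * L by norm_num, exp_nat_mul,
          exp_log hd0]
        gcongr
        calc (1 + w / d) ^ d ≤ exp (w / d) ^ d := by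
              gcongr; linarith [add_one_le_exp (w / d)]
          _ = exp w := by rw [← exp_nat_mul, mul_div_cancel₀ _ hd0.ne']
    _ ≤ exp (s * log (1 + δ)) := by rw [← exp_add]; exact exp_le_exp.mpr (by linarith)
    _ = (1 + δ) ^ s := by rw [exp_nat_mul, exp_log (by positivity)]

theorem maxDeg_le_of_forall_degN_le {H : SimpleGraph V} {r : ℕ} (h : ∀ v, degN H v ≤ r) :
    maxDeg H ≤ r :=
  csSup_le' (Set.forall_mem_range.mpr h)

theorem not_connected_sdiff_bipartiteBetween (G : SimpleGraph V) (f : V → Bool) {a b : V}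
    (hab : f a ≠ f b) : ¬ (G \ bipartiteBetween G {v | f v}).Connected := by
  have hadj : ∀ u w, (G \ bipartiteBetween G {v | f v}).Adj u w → f u = f w := by
    intro u w huw
    simp only [sdiff_adj, bipartiteBetween, Set.mem_ofPred_eq] at huw
    cases hu : f u <;> cases hw : f w <;> simp_all
  suffices ∀ {u w} (p : (G \ bipartiteBetween G {v | f v}).Walk u w), f u = f w from
    fun h => hab (this (h.preconnected a b).some)
  intro u w p
  induction p with
  | nil => rfl
  | cons h _ ih => exact (hadj _ _ h).trans ih

theorem exists_ne_of_card_lt_card {β : Type*} [Fintype β] [Nonempty V] {s : Finset (V → β)}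
    (hs : Fintype.card β < #s) : ∃ f ∈ s, ∃ a b, f a ≠ f b := by
  by_contra! h
  obtain ⟨a⟩ := ‹Nonempty V›
  have hinj : Set.InjOn (fun f : V → β => f a) s := fun f hf g hg hfg =>
    funext fun b => (h f hf b a).trans (hfg.trans (h g hg a b))
  exact hs.not_ge ((card_le_card_of_injOn _ (fun _ _ => mem_univ _) hinj).trans_eq card_univ)

section CrossDegree

variable [Fintype V] (G : SimpleGraph V)

noncomputable def crossDegree (f : V → Bool) (v : V) : ℕ :=
  #{u ∈ G.neighborFinset v | f u ≠ f v}

theorem degN_eq_degree (v : V) : degN G v = G.degree v := by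
  rw [degN, ← card_neighborSet_eq_degree, Set.ncard_eq_toFinset_card', Set.toFinset_card]

theorem degN_bipartiteBetween (f : V → Bool) (v : V) :
    degN (bipartiteBetween G {v | f v}) v = crossDegree G f v := by
  rw [degN_eq_degree, crossDegree, ← card_neighborFinset_eq_degree]
  congr 1
  ext u
  rw [mem_neighborFinset, mem_filter, mem_neighborFinset]
  simp only [bipartiteBetween, Set.mem_ofPred_eq]
  cases f u <;> cases f v <;> simp

theorem crossDegree_eq_card_filter (f : V → Bool) (v : V) :
    crossDegree G f v = #{u ∈ G.neighborFinset v | f u = !f v} := by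
  rw [crossDegree]
  congr 1
  ext u
  cases f u <;> cases f v <;> simp

theorem card_filter_le_crossDegree_mul_pow_le {r : ℝ} (hr : 1 ≤ r) (v : V) (s : ℕ) :
    #{f | s ≤ crossDegree G f v} * r ^ s
      ≤ 2 * ((1 + r) ^ G.degree v * 2 ^ (Fintype.card V - G.degree v)) := by
  set N := G.neighborFinset v
  have htail (c : Bool) : #{f ∈ (univ : Finset (V → Bool)) | s ≤ #{u ∈ N | f u = c}} * r ^ s
      ≤ (1 + r) ^ G.degree v * 2 ^ (Fintype.card V - G.degree v) := by
    rw [← card_neighborFinset_eq_degree, ← sum_pow_card_filter_eq]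
    exact card_filter_le_mul_pow_le_sum hr _ s
  have hsub : {f ∈ (univ : Finset (V → Bool)) | s ≤ crossDegree G f v}
      ⊆ {f ∈ (univ : Finset (V → Bool)) | s ≤ #{u ∈ N | f u = true}}
        ∪ {f ∈ (univ : Finset (V → Bool)) | s ≤ #{u ∈ N | f u = false}} := by
    intro f hf
    simp only [mem_filter, mem_univ, true_and, mem_union, crossDegree_eq_card_filter] at hf ⊢
    cases hv : f v <;> simp_all [N]
  calc (#{f | s ≤ crossDegree G f v} : ℝ) * r ^ s
      ≤ (#{f ∈ (univ : Finset (V → Bool)) | s ≤ #{u ∈ N | f u = true}}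
          + #{f ∈ (univ : Finset (V → Bool)) | s ≤ #{u ∈ N | f u = false}} : ℕ) * r ^ s := by
        gcongr
        exact (card_le_card hsub).trans (card_union_le _ _)
    _ ≤ _ := by
        push_cast
        linarith [htail true, htail false]

/- Exponential Markov inequality with base `1 + 2 √(d log d) / d`. -/
theorem pow_four_mul_card_cutThreshold_lt_crossDegree_le {d : ℕ} (hd : 3 ≤ d) {v : V}
    (hv : G.degree v = d) :
    (d : ℝ) ^ 4 * #{f | cutThreshold d < crossDegree G f v} ≤ 2 ^ Fintype.card V := by
  by_cases ht : (d : ℝ) / 2 < 4 * √(d * log d)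
  · have hempty : #{f | cutThreshold d < crossDegree G f v} = 0 := by
      refine card_eq_zero.mpr (filter_eq_empty_iff.mpr fun f _ => not_lt.mpr ?_)
      calc (crossDegree G f v : ℝ) ≤ d := by
            rw [← hv, ← card_neighborFinset_eq_degree]; exact_mod_cast card_filter_le _ _
        _ ≤ cutThreshold d := by rw [cutThreshold]; linarith
    rw [hempty, Nat.cast_zero, mul_zero]
    positivity
  set s := ⌊cutThreshold d⌋₊ + 1
  have hs : cutThreshold d ≤ s := by
    simp only [s, Nat.cast_add, Nat.cast_one]; exact (Nat.lt_floor_add_one _).le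
  have hbad : {f ∈ (univ : Finset (V → Bool)) | cutThreshold d < crossDegree G f v}
      = {f ∈ (univ : Finset (V → Bool)) | s ≤ crossDegree G f v} := by
    ext f; simp [s, Nat.floor_lt (cutThreshold_nonneg d)]
  set r := 1 + 2 * √(d * log d) / d
  have hr : 1 ≤ r := by simp only [r]; linarith [show 0 ≤ 2 * √(d * log d) / d by positivity]
  have hdn : d ≤ Fintype.card V := hv ▸ (G.degree_lt_card_verts v).le
  have htail := card_filter_le_crossDegree_mul_pow_le G hr v s
  rw [hv, show 1 + r = 2 * (1 + √(d * log d) / d) by simp only [r]; ring, mul_pow, mul_right_comm,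
    ← pow_add, Nat.add_sub_cancel' hdn] at htail
  rw [hbad]
  refine le_of_mul_le_mul_right ?_ (by positivity : 0 < r ^ s)
  calc (d : ℝ) ^ 4 * #{f | s ≤ crossDegree G f v} * r ^ s
      ≤ (d : ℝ) ^ 4 * (2 * (2 ^ Fintype.card V * (1 + √(d * log d) / d) ^ d)) := by
        rw [mul_assoc]; gcongr
    _ = 2 ^ Fintype.card V * (2 * (d : ℝ) ^ 4 * (1 + √(d * log d) / d) ^ d) := by ring
    _ ≤ 2 ^ Fintype.card V * r ^ s := by
        gcongr; exact two_mul_pow_four_mul_pow_le_pow hd (not_lt.mp ht) hs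

noncomputable def closedNbhd (v : V) : Finset V := insert v (G.neighborFinset v)

theorem mem_closedNbhd_comm {u v : V} : u ∈ closedNbhd G v ↔ v ∈ closedNbhd G u := by
  simp [closedNbhd, adj_comm, eq_comm]

theorem card_closedNbhd (v : V) : #(closedNbhd G v) = G.degree v + 1 := by
  rw [closedNbhd, card_insert_of_notMem (by simp), card_neighborFinset_eq_degree]

theorem crossDegree_dependsOn (v : V) :
    DependsOn (fun f => crossDegree G f v) (closedNbhd G v : Set V) := fun f g h => by
  have hv := h v (by simp [closedNbhd])
  simp only [crossDegree]
  congr 1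
  refine filter_congr fun u hu => ?_
  rw [h u (mem_coe.mpr (mem_insert_of_mem hu)), hv]

theorem card_not_disjoint_closedNbhd_le {d : ℕ} (hreg : ∀ v, G.degree v = d) (v : V) :
    #{u | ¬ Disjoint (closedNbhd G u : Set V) (closedNbhd G v)} ≤ (d + 1) ^ 2 := by
  calc #{u | ¬ Disjoint (closedNbhd G u : Set V) (closedNbhd G v)}
      ≤ #((closedNbhd G v).biUnion (closedNbhd G)) := card_le_card fun u hu => by
        simp only [mem_filter, Finset.disjoint_coe, not_disjoint_iff] at hu
        obtain ⟨w, hwu, hwv⟩ := hu.2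
        exact mem_biUnion.mpr ⟨w, hwv, (mem_closedNbhd_comm G).mp hwu⟩
    _ ≤ ∑ w ∈ closedNbhd G v, #(closedNbhd G w) := card_biUnion_le
    _ = (d + 1) ^ 2 := by simp [card_closedNbhd, hreg, sq]

theorem exists_nonconstant_crossDegree_le_cutThreshold {d : ℕ} (hd : 3 ≤ d) (hn : 2 ≤ Fintype.card V)
    (hreg : ∀ v, G.degree v = d) :
    ∃ f : V → Bool, (∀ v, (crossDegree G f v : ℝ) ≤ cutThreshold d) ∧ ∃ a b, f a ≠ f b := by
  -- with this weight Bernoulli's inequality gives `(1 - x) ^ (d + 1) ^ 2 ≥ 1 / 2`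
  set x : ℝ := 1 / (2 * (d + 1) ^ 2)
  have hd' : (3 : ℝ) ≤ d := by exact_mod_cast hd
  have hx0 : 0 ≤ x := by positivity
  have hx : x ≤ 1 / 32 := by
    rw [div_le_div_iff₀ (by positivity) (by norm_num)]; nlinarith
  have hp (v : V) : (#{f | cutThreshold d < crossDegree G f v} : ℝ)
      ≤ x * (1 - x) ^ ((d + 1) ^ 2) * Fintype.card (V → Bool) := by
    have hbern : 1 / 2 ≤ (1 - x) ^ ((d + 1) ^ 2) := by
      have := one_add_mul_le_pow (a := -x) (by linarith) ((d + 1) ^ 2)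
      have hkx : (((d + 1) ^ 2 : ℕ) : ℝ) * x = 1 / 2 := by
        simp only [x]; push_cast; field_simp
      rw [← sub_eq_add_neg] at this
      linarith
    have hdx : 1 / (d : ℝ) ^ 4 ≤ x / 2 := by
      simp only [x]
      rw [div_div, div_le_div_iff₀ (by positivity) (by positivity)]
      nlinarith [sq_nonneg ((d : ℝ) - 3), sq_nonneg ((d : ℝ) ^ 2 - 3 * d)]
    have hbad := pow_four_mul_card_cutThreshold_lt_crossDegree_le G hd (hreg v)
    rw [Fintype.card_fun, Fintype.card_bool, Nat.cast_pow, Nat.cast_two]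
    calc (#{f | cutThreshold d < crossDegree G f v} : ℝ)
        ≤ 1 / (d : ℝ) ^ 4 * 2 ^ Fintype.card V := by
          rw [one_div_mul_eq_div, le_div_iff₀ (by positivity), mul_comm]; exact hbad
      _ ≤ x * (1 / 2) * 2 ^ Fintype.card V := by rw [← div_eq_mul_one_div]; gcongr
      _ ≤ x * (1 - x) ^ ((d + 1) ^ 2) * 2 ^ Fintype.card V := by gcongr
  have hgood := pow_mul_card_le_card_avoiding
    (A := fun v f => cutThreshold d < crossDegree G f v) (D := fun v => closedNbhd G v)
    (fun v f g h => by simp only [crossDegree_dependsOn G v h]) hx0 (by linarith)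
    (card_not_disjoint_closedNbhd_le G hreg) hp univ
  rw [card_univ, Fintype.card_fun, Fintype.card_bool, Nat.cast_pow, Nat.cast_two, ← mul_pow]
    at hgood
  have htwo : (2 : ℝ) < #(avoiding (fun v f => cutThreshold d < crossDegree G f v) univ) :=
    calc (2 : ℝ) < (31 / 16) ^ 2 := by norm_num
      _ ≤ (31 / 16) ^ Fintype.card V := pow_le_pow_right₀ (by norm_num) hn
      _ ≤ ((1 - x) * 2) ^ Fintype.card V := pow_le_pow_left₀ (by norm_num) (by linarith) _
      _ ≤ _ := hgood
  have : Nonempty V := Fintype.card_pos_iff.mp (by omega)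
  obtain ⟨f, hf, hne⟩ := exists_ne_of_card_lt_card (s := avoiding _ univ)
    (by rw [Fintype.card_bool]; exact_mod_cast htwo)
  exact ⟨f, fun v => not_lt.mp (mem_avoiding.mp hf v (mem_univ v)), hne⟩

end CrossDegree

/-- every d-regular graph (3 ≤ d ≤ n-1) has a subgraph H with
Δ(H) ≤ d/2 + 4√(d ln d) whose removal disconnects the graph. -/
theorem stmt2 {V : Type*} [Fintype V] (G : SimpleGraph V) (d : ℕ)
    (hd3 : 3 ≤ d) (hdn : d ≤ Fintype.card V - 1) (hreg : IsReg G d) :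
    ∃ H ≤ G, (maxDeg H : ℝ) ≤ (d : ℝ) / 2 + 4 * Real.sqrt (d * Real.log d) ∧
      ¬ (G \ H).Connected := by
  obtain ⟨f, hf, a, b, hab⟩ := exists_nonconstant_crossDegree_le_cutThreshold G hd3 (by omega)
    fun v => (degN_eq_degree G v).symm.trans (hreg v)
  refine ⟨bipartiteBetween G {v | f v}, fun _ _ h => h.1, ?_,
    not_connected_sdiff_bipartiteBetween G f hab⟩
  have hmax : maxDeg (bipartiteBetween G {v | f v}) ≤ ⌊cutThreshold d⌋₊ :=
    maxDeg_le_of_forall_degN_le fun v => degN_bipartiteBetween G f v ▸ Nat.le_floor (hf v)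
  exact (Nat.cast_le.mpr hmax).trans (Nat.floor_le (cutThreshold_nonneg d))
end

section
/- Let r ≥ 1 and let G₀, G₁ be graphs on the same vertex set V of size n such that for every edge set E' ⊆ E(G₁) with |E'| ≤ n there exists a vertex v with |N_{G₁}(v) ∩ B_{G₀∪E'}(v)| > r. Then for every subgraph H ⊆ G₁ with Δ(H) ≤ r, the graph G₀ + (G₁ − H) is Hamiltonian. -/
open SimpleGraph Real
open scoped Classical

variable {V : Type*}

/-!
Grow a set `E'` of edges of `G₁ - H`, keeping `|E'| ≤ ℓ(G₀ ∪ E')`. Since `ℓ < n`, the hypothesis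
applies to `E'` and yields a vertex with more than `r` booster neighbours in `G₁`; as `Δ(H) ≤ r`,
one of these edges lies in `G₁ - H`. Adding it either makes `G₀ ∪ E'` Hamiltonian or raises both
`|E'|` and `ℓ` by at least one, and the latter cannot go on for more than `n` steps.
-/

lemma maxPathLength_lt_card [Fintype V] [Nonempty V] (G : SimpleGraph V) :
    maxPathLength G < Fintype.card V := by
  have hle : maxPathLength G ≤ Fintype.card V - 1 :=
    csSup_le' fun _ ⟨_, _, _, hp, hn⟩ => hn ▸ Nat.le_pred_of_lt hp.length_lt
  have := Fintype.card_pos (α := V)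
  omega

lemma degN_le_maxDeg [Finite V] (H : SimpleGraph V) (v : V) : degN H v ≤ maxDeg H :=
  le_csSup (Set.finite_range _).bddAbove ⟨v, rfl⟩

lemma exists_sdiff_adj_of_maxDeg_le [Finite V] {G H : SimpleGraph V} {r : ℕ} {v : V}
    {S : Set V} (hH : maxDeg H ≤ r) (hS : r < (G.neighborSet v ∩ S).ncard) :
    ∃ w ∈ S, (G \ H).Adj v w := by
  by_contra! hnone
  have hsub : G.neighborSet v ∩ S ⊆ H.neighborSet v := fun w ⟨hGw, hw⟩ => by
    by_contra hHw
    exact hnone w hw ⟨hGw, hHw⟩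
  have := (Set.ncard_le_ncard hsub (Set.toFinite _)).trans ((degN_le_maxDeg H v).trans hH)
  omega

lemma sup_fromEdgeSet_insert (G : SimpleGraph V) (e : Sym2 V) (s : Set (Sym2 V)) :
    G ⊔ fromEdgeSet (insert e s) = G ⊔ fromEdgeSet s ⊔ fromEdgeSet {e} := by
  rw [Set.insert_eq, fromEdgeSet_union, sup_comm (fromEdgeSet {e}), sup_assoc]

lemma isHamiltonian_sup_of_ncard_le_maxPathLength [Fintype V] [Nonempty V]
    {G₀ G : SimpleGraph V}
    (hstep : ∀ E' ⊆ G.edgeSet, E'.ncard < Fintype.card V →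
      ∃ e ∈ G.edgeSet, e ∈ boosterSet (G₀ ⊔ fromEdgeSet E'))
    (E' : Set (Sym2 V)) (hE' : E' ⊆ G.edgeSet)
    (hlen : E'.ncard ≤ maxPathLength (G₀ ⊔ fromEdgeSet E')) :
    (G₀ ⊔ G).IsHamiltonian := by
  have hcard : E'.ncard < Fintype.card V := hlen.trans_lt (maxPathLength_lt_card _)
  obtain ⟨_, he, u, v, rfl, huv, hnadj, hboost⟩ := hstep E' hE' hcard
  have hE'' : insert s(u, v) E' ⊆ G.edgeSet := Set.insert_subset he hE'
  rcases hboost with hham | hlonger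
  · refine hham.mono ?_
    rw [← sup_fromEdgeSet_insert]
    exact sup_le_sup_left ((fromEdgeSet_mono hE'').trans_eq (fromEdgeSet_edgeSet G)) G₀
  · have hnotin : s(u, v) ∉ E' := fun h => hnadj (Or.inr ((fromEdgeSet_adj E').2 ⟨h, huv⟩))
    have hsucc : (insert s(u, v) E').ncard = E'.ncard + 1 := Set.ncard_insert_of_notMem hnotin
    refine isHamiltonian_sup_of_ncard_le_maxPathLength hstep _ hE'' ?_
    rw [hsucc, sup_fromEdgeSet_insert]
    omega
termination_by Fintype.card V - E'.ncard
decreasing_by omega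

lemma isHamiltonian_sup_of_exists_booster [Fintype V] [Nonempty V] {G₀ G : SimpleGraph V}
    (hstep : ∀ E' ⊆ G.edgeSet, E'.ncard < Fintype.card V →
      ∃ e ∈ G.edgeSet, e ∈ boosterSet (G₀ ⊔ fromEdgeSet E')) :
    (G₀ ⊔ G).IsHamiltonian :=
  isHamiltonian_sup_of_ncard_le_maxPathLength hstep ∅ (Set.empty_subset _) (by simp)

theorem stmt8_general {V : Type*} [Fintype V] (G₀ G₁ : SimpleGraph V) (r : ℕ)
    (h : ∀ E' ⊆ G₁.edgeSet, E'.ncard ≤ Fintype.card V →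
      ∃ v : V, r < ((G₁.neighborSet v) ∩ BSet (G₀ ⊔ SimpleGraph.fromEdgeSet E') v).ncard) :
    ∀ H ≤ G₁, maxDeg H ≤ r → (G₀ ⊔ (G₁ \ H)).IsHamiltonian := by
  intro H _ hH
  obtain ⟨v₀, -⟩ := h ∅ (Set.empty_subset _) (by simp)
  have : Nonempty V := ⟨v₀⟩
  refine isHamiltonian_sup_of_exists_booster fun E' hE' hcard => ?_
  obtain ⟨v, hv⟩ := h E' (hE'.trans (edgeSet_mono sdiff_le)) hcard.le
  obtain ⟨w, hboost, hadj⟩ := exists_sdiff_adj_of_maxDeg_le hH hv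
  exact ⟨s(v, w), hadj, v, w, rfl, hboost⟩

/-- the booster lemma. If for every E' ⊆ E(G₁) with |E'| ≤ n there is a
vertex v with more than r neighbours in G₁ that are boosters w.r.t. G₀ ∪ E', then for
every H ⊆ G₁ with Δ(H) ≤ r the graph G₀ + (G₁ - H) is Hamiltonian. -/
theorem stmt8 {V : Type*} [Fintype V] (G₀ G₁ : SimpleGraph V) (r : ℕ) (hr : 1 ≤ r)
    (h : ∀ E' ⊆ G₁.edgeSet, E'.ncard ≤ Fintype.card V →
      ∃ v : V, r < ((G₁.neighborSet v) ∩ BSet (G₀ ⊔ SimpleGraph.fromEdgeSet E') v).ncard) :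
    ∀ H ≤ G₁, maxDeg H ≤ r → (G₀ ⊔ (G₁ \ H)).IsHamiltonian :=
  stmt8_general G₀ G₁ r h
end
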